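/- In the two-candidate reduced instance, for every W ⊆ V \ {u_1}: if candidate 1 uniquely wins the election restricted to W (i.e., |H_W ∩ τ⁻¹(1)| > |H_W ∩ τ⁻¹(0)|), then candidate 1 also uniquely wins the election restricted to W' := W \ {w_{j,k} : j ∈ {1,…,m}, k ∈ {1,…,3ℓ}}. -/

import Mathlib

/-- Vertices of the two-candidate reduced instance: the path vertices
`u_1, …, u_{ℓ(3m−1)}` (0-indexed as `u i` for `i : Fin (ℓ * (3 * m - 1))`, so `u_1` is
`u ⟨0, _⟩`), the vertex `r`, the vertices `v_1, …, v_m`, and the vertices `w_{j,k}` for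
`j ∈ [m]`, `k ∈ [3ℓ]` (both 0-indexed). -/
inductive V2 (ℓ m : ℕ) : Type
  | u (i : Fin (ℓ * (3 * m - 1))) : V2 ℓ m
  | r : V2 ℓ m
  | v (i : Fin m) : V2 ℓ m
  | w (j : Fin m) (k : Fin (3 * ℓ)) : V2 ℓ m
  deriving DecidableEq

/-- Base edge relation of the two-candidate reduced instance: `u_i ~ u_{i+1}`,
`u_{ℓ(3m−1)} ~ r`, `r ~ v_i` for all `i`, and `v_i ~ w_{j,k}` iff `k ∈ S i`. -/
def baseRel2 (ℓ m : ℕ) (S : Fin m → Finset (Fin (3 * ℓ))) :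
    V2 ℓ m → V2 ℓ m → Prop
  | .u i, .u i' => (i : ℕ) + 1 = (i' : ℕ)
  | .u i, .r => (i : ℕ) + 1 = ℓ * (3 * m - 1)
  | .r, .v _ => True
  | .v i, .w _ k => k ∈ S i
  | _, _ => False

/-- The graph of the two-candidate reduced instance. -/
def G2 (ℓ m : ℕ) (S : Fin m → Finset (Fin (3 * ℓ))) : SimpleGraph (V2 ℓ m) :=
  SimpleGraph.fromRel (baseRel2 ℓ m S)

/-- The voting function of the two-candidate reduced instance: `u`'s and `v`'s vote for
candidate `0`; `r` and the `w`'s vote for candidate `1`. -/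
def τ2 (ℓ m : ℕ) : V2 ℓ m → Fin 2
  | .u _ => 0
  | .r => 1
  | .v _ => 0
  | .w _ _ => 1

/-- The distinguished vertex `x = u_1`. -/
def x2 (ℓ m : ℕ) (h : 0 < ℓ * (3 * m - 1)) : V2 ℓ m := V2.u ⟨0, h⟩

/-- `HW G W x`: the set of vertices reachable from `x` in the subgraph of `G` induced on
the complement of `W` (each step of a connecting walk must avoid `W`). -/
def HW {V : Type*} (G : SimpleGraph V) (W : Set V) (x : V) : Set V :=
  {z | Relation.ReflTransGen (fun a b => G.Adj a b ∧ a ∉ W ∧ b ∉ W) x z}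

/-- With two candidates, candidate `1` uniquely wins the election restricted to `W` iff
`|H_W ∩ τ⁻¹(1)| > |H_W ∩ τ⁻¹(0)|`. -/
def wins2 (ℓ m : ℕ) (S : Fin m → Finset (Fin (3 * ℓ))) (x : V2 ℓ m)
    (W : Set (V2 ℓ m)) : Prop :=
  (HW (G2 ℓ m S) W x ∩ τ2 ℓ m ⁻¹' {0}).ncard <
    (HW (G2 ℓ m S) W x ∩ τ2 ℓ m ⁻¹' {1}).ncard

instance V2.finite (ℓ m : ℕ) : Finite (V2 ℓ m) := by
  let f : V2 ℓ m → (Fin (ℓ * (3 * m - 1)) ⊕ Unit ⊕ Fin m ⊕ Fin m × Fin (3 * ℓ)) := fun z =>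
    match z with
    | .u i => Sum.inl i
    | .r => Sum.inr (Sum.inl ())
    | .v i => Sum.inr (Sum.inr (Sum.inl i))
    | .w j k => Sum.inr (Sum.inr (Sum.inr (j, k)))
  have hf : Function.Injective f := by
    intro a b h
    cases a <;> cases b <;> simp_all [f]
  exact Finite.of_injective f hf


/-- If candidate `1` uniquely wins the election restricted to `W`, then it also uniquely
wins restricted to `W' = W` minus all the `w_{j,k}` vertices. -/
theorem wins_after_removing_w_vertices (ℓ m : ℕ) (hℓ : 1 ≤ ℓ) (hm : 1 ≤ m)
    (S : Fin m → Finset (Fin (3 * ℓ)))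
    (hS3 : ∀ i, (S i).card = 3)
    (hcov : Finset.univ.biUnion S = Finset.univ)
    (W : Set (V2 ℓ m)) (hW : x2 ℓ m (Nat.mul_pos hℓ (by omega)) ∉ W)
    (hwin : wins2 ℓ m S (x2 ℓ m (Nat.mul_pos hℓ (by omega))) W) :
    wins2 ℓ m S (x2 ℓ m (Nat.mul_pos hℓ (by omega)))
      (W \ {z | ∃ j k, z = V2.w j k}) := by
  classical
  have hpos : 0 < ℓ * (3 * m - 1) := Nat.mul_pos hℓ (by omega)
  set x : V2 ℓ m := V2.u ⟨0, hpos⟩ with hxdef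
  set G := G2 ℓ m S with hG
  set W' : Set (V2 ℓ m) := W \ {z | ∃ j k, z = V2.w j k} with hW'def
  have hxW : x ∉ W := hW
  have hwin' : wins2 ℓ m S x W := hwin
  clear hwin hW
  suffices hgoal : wins2 ℓ m S x W' by exact hgoal
  -- every vertex of H_W avoids W
  have hWnot : ∀ z, z ∈ HW G W x → z ∉ W := by
    intro z hz
    simp only [HW, Set.mem_setOf_eq] at hz
    induction hz with
    | refl => exact hxW
    | tail _ hstep _ => exact hstep.2.2
  -- if some 1-voter is reachable avoiding W, then r is reachable and r ∉ W
  have hne : (HW G W x ∩ τ2 ℓ m ⁻¹' {1}).Nonempty := by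
    by_contra h
    rw [Set.not_nonempty_iff_eq_empty] at h
    unfold wins2 at hwin'
    rw [h] at hwin'
    simp at hwin'
  have main : ∀ z, z ∈ HW G W x → ((∃ i, z = V2.u i) ∨ (V2.r ∈ HW G W x ∧ V2.r ∉ W)) := by
    intro z hz
    simp only [HW, Set.mem_setOf_eq] at hz
    induction hz with
    | refl => exact Or.inl ⟨_, rfl⟩
    | @tail b c hab hstep ih =>
      rcases ih with ⟨i, rfl⟩ | hr
      · obtain ⟨hadj, hbW, hcW⟩ := hstep
        cases c with
        | u i' => exact Or.inl ⟨_, rfl⟩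
        | r => exact Or.inr ⟨Relation.ReflTransGen.tail hab ⟨hadj, hbW, hcW⟩, hcW⟩
        | v i' => simp [hG, G2, SimpleGraph.fromRel_adj, baseRel2] at hadj
        | w j k => simp [hG, G2, SimpleGraph.fromRel_adj, baseRel2] at hadj
      · exact Or.inr hr
  obtain ⟨z, hz, hz1⟩ := hne
  have hz1' : τ2 ℓ m z = 1 := hz1
  obtain ⟨hrH, hrW⟩ : V2.r ∈ HW G W x ∧ V2.r ∉ W := by
    rcases main z hz with ⟨i, rfl⟩ | h
    · simp [τ2] at hz1'
    · exact h
  -- monotonicity: H_W ⊆ H_{W'}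
  have hsub : HW G W x ⊆ HW G W' x := by
    intro z hz
    exact Relation.ReflTransGen.mono (p := fun a b => G.Adj a b ∧ a ∉ W' ∧ b ∉ W')
      (by intro a b hab; exact ⟨hab.1, fun h => hab.2.1 h.1, fun h => hab.2.2 h.1⟩) _ _ hz
  -- every vertex reachable avoiding W' is reachable avoiding W, or is a w-vertex
  have main2 : ∀ z, z ∈ HW G W' x → z ∈ HW G W x ∨ (∃ j k, z = V2.w j k) := by
    intro z hz
    simp only [HW, Set.mem_setOf_eq] at hz
    induction hz with
    | refl => exact Or.inl Relation.ReflTransGen.refl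
    | @tail b c hab hstep ih =>
      obtain ⟨hadj, hbW', hcW'⟩ := hstep
      rcases ih with hbH | ⟨j, k, rfl⟩
      · cases c with
        | w j k => exact Or.inr ⟨j, k, rfl⟩
        | u i =>
          refine Or.inl (Relation.ReflTransGen.tail hbH ⟨hadj, hWnot b hbH, ?_⟩)
          intro hc; exact hcW' ⟨hc, by simp⟩
        | r =>
          refine Or.inl (Relation.ReflTransGen.tail hbH ⟨hadj, hWnot b hbH, ?_⟩)
          intro hc; exact hcW' ⟨hc, by simp⟩
        | v i =>
          refine Or.inl (Relation.ReflTransGen.tail hbH ⟨hadj, hWnot b hbH, ?_⟩)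
          intro hc; exact hcW' ⟨hc, by simp⟩
      · -- b = w j k, so c must be some v i
        cases c with
        | u i => simp [hG, G2, SimpleGraph.fromRel_adj, baseRel2] at hadj
        | r => simp [hG, G2, SimpleGraph.fromRel_adj, baseRel2] at hadj
        | w j' k' => simp [hG, G2, SimpleGraph.fromRel_adj, baseRel2] at hadj
        | v i =>
          have hcW : V2.v i ∉ W := fun hc => hcW' ⟨hc, by simp⟩
          have hadjrv : G.Adj V2.r (V2.v i) := by
            simp [hG, G2, SimpleGraph.fromRel_adj, baseRel2]
          exact Or.inl (Relation.ReflTransGen.tail hrH ⟨hadjrv, hrW, hcW⟩)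
  -- the 0-voters reachable are the same
  have h0 : HW G W' x ∩ τ2 ℓ m ⁻¹' {0} = HW G W x ∩ τ2 ℓ m ⁻¹' {0} := by
    ext z
    constructor
    · rintro ⟨hz, h0⟩
      rcases main2 z hz with h | ⟨j, k, rfl⟩
      · exact ⟨h, h0⟩
      · simp [τ2, Set.mem_preimage] at h0
    · rintro ⟨hz, h0⟩
      exact ⟨hsub hz, h0⟩
  have h1 : (HW G W x ∩ τ2 ℓ m ⁻¹' {1}).ncard ≤ (HW G W' x ∩ τ2 ℓ m ⁻¹' {1}).ncard :=
    Set.ncard_le_ncard (Set.inter_subset_inter_left _ hsub) (Set.toFinite _)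
  unfold wins2 at hwin' ⊢
  calc (HW G W' x ∩ τ2 ℓ m ⁻¹' {0}).ncard
      = (HW G W x ∩ τ2 ℓ m ⁻¹' {0}).ncard := by rw [h0]
    _ < (HW G W x ∩ τ2 ℓ m ⁻¹' {1}).ncard := hwin'
    _ ≤ _ := h1
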